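/- Let H be a separable infinite-dimensional complex Hilbert space and let {f_n}_{n=0}^∞ be a sequence in H. Then {f_n} is an ICFC sequence (i.e., there exists an injective bounded linear operator B on H such that {B f_n} is a Parseval frame for H) if and only if there exist a dense linear subspace D ⊆ H and a constant A > 0 such that A‖f‖² ≤ ∑_{n=0}^∞ |⟨f, f_n⟩|² < ∞ for every f ∈ D. -/

import Mathlib

/-!
If `B` is injective and `(B fₙ)` is a Parseval frame, then on the range of `B*`, which is dense
because `(range B*)ᗮ = ker B = 0`, we have `∑ |⟪B* g, fₙ⟫|² = ‖g‖² ≥ ‖B* g‖² / ‖B‖²`.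

Conversely, the analysis operator `Θ x = (⟪fₙ, x⟫)ₙ` is bounded below on `D`, so its inverse
extends to a bounded operator `T` from the closure `M` of `Θ D` in `ℓ²` to `H`, with dense range
`⊇ D`. Hence `T*` is injective, and testing against `Θ D` shows `T* fₙ = P_M eₙ`. The projections
`P_M eₙ` of the standard basis form a Parseval frame of `M`, and `M ≅ H` isometrically since both
are separable and infinite-dimensional, so `B = U T*` works for any such isometry `U`.
-/

section

open scoped InnerProductSpace InnerProduct lp

variable {𝕜 E F ι : Type*} [RCLike 𝕜]
  [NormedAddCommGroup E] [InnerProductSpace 𝕜 E] [NormedAddCommGroup F] [InnerProductSpace 𝕜 F]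

def IsParsevalFrame (𝕜 : Type*) {E ι : Type*} [RCLike 𝕜] [NormedAddCommGroup E]
    [InnerProductSpace 𝕜 E] (g : ι → E) : Prop :=
  ∀ x : E, HasSum (fun i => ‖⟪x, g i⟫_𝕜‖ ^ 2) (‖x‖ ^ 2)

theorem IsParsevalFrame.comp_linearIsometryEquiv {g : ι → E} (h : IsParsevalFrame 𝕜 g)
    (U : E ≃ₗᵢ[𝕜] F) : IsParsevalFrame 𝕜 (U ∘ g) := fun y => by
  simpa [← U.inner_map_map, U.apply_symm_apply] using h (U.symm y)

theorem lp.hasSum_norm_sq {G : ι → Type*} [∀ i, NormedAddCommGroup (G i)] (x : lp G 2) :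
    HasSum (fun i => ‖x i‖ ^ 2) (‖x‖ ^ 2) := by
  simpa using lp.hasSum_norm (p := 2) (by norm_num) x

theorem memℓp_two_of_summable {G : ι → Type*} [∀ i, NormedAddCommGroup (G i)] {x : ∀ i, G i}
    (hx : Summable fun i => ‖x i‖ ^ 2) : Memℓp x 2 :=
  memℓp_gen (by simpa using hx)

theorem isParsevalFrame_orthogonalProjectionOnto_single [DecidableEq ι]
    (M : Submodule 𝕜 ℓ²(ι, 𝕜)) [CompleteSpace M] :
    IsParsevalFrame 𝕜 fun i => M.orthogonalProjectionOnto (lp.single 2 i (1 : 𝕜)) := fun y => by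
  simpa [lp.inner_single_right] using lp.hasSum_norm_sq (y : ℓ²(ι, 𝕜))

section SeparableHilbertSpace

theorem Orthonormal.countable [TopologicalSpace.SeparableSpace E] {v : ι → E}
    (hv : Orthonormal 𝕜 v) : Countable ι := by
  refine Pairwise.countable_of_isOpen_disjoint (s := fun i => Metric.ball (v i) (1 / 2))
    (fun i j hij => Metric.ball_disjoint_ball ?_) (fun _ => Metric.isOpen_ball)
    (fun _ => Metric.nonempty_ball.2 (by norm_num))
  have h : dist (v i) (v j) ^ 2 = 2 := by
    rw [dist_eq_norm, @norm_sub_sq 𝕜, hv.norm_eq_one, hv.norm_eq_one, hv.inner_eq_zero hij]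
    norm_num
  nlinarith [dist_nonneg (x := v i) (y := v j)]

theorem HilbertBasis.finiteDimensional [Finite ι] (b : HilbertBasis ι 𝕜 E) :
    FiniteDimensional 𝕜 E :=
  have := Fintype.ofFinite ι
  .of_basis b.toOrthonormalBasis.toBasis

theorem HilbertBasis.separableSpace [Countable ι] (b : HilbertBasis ι 𝕜 E) :
    TopologicalSpace.SeparableSpace E := by
  have h := (Set.countable_range b).isSeparable.span (R := 𝕜) |>.closure
  rw [← Submodule.topologicalClosure_coe, b.dense_span, Submodule.top_coe] at h
  exact TopologicalSpace.isSeparable_univ_iff.1 h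

instance [Countable ι] : TopologicalSpace.SeparableSpace ℓ²(ι, 𝕜) :=
  (default : HilbertBasis ι 𝕜 ℓ²(ι, 𝕜)).separableSpace

noncomputable def HilbertBasis.reindex [CompleteSpace E] {ι' : Type*} (b : HilbertBasis ι 𝕜 E)
    (e : ι ≃ ι') : HilbertBasis ι' 𝕜 E :=
  .mk (b.orthonormal.comp _ e.symm.injective) <| by
    rw [EquivLike.range_comp, b.dense_span]

theorem exists_hilbertBasis_nat [CompleteSpace E] [TopologicalSpace.SeparableSpace E]
    (hE : ¬ FiniteDimensional 𝕜 E) : Nonempty (HilbertBasis ℕ 𝕜 E) := by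
  obtain ⟨w, b, -⟩ := exists_hilbertBasis 𝕜 E
  have := b.orthonormal.countable
  have : Infinite w := by
    by_contra! h
    exact hE b.finiteDimensional
  obtain ⟨e⟩ := nonempty_equiv_of_countable (α := w) (β := ℕ)
  exact ⟨b.reindex e⟩

theorem nonempty_linearIsometryEquiv_of_not_finiteDimensional [CompleteSpace E] [CompleteSpace F]
    [TopologicalSpace.SeparableSpace E] [TopologicalSpace.SeparableSpace F]
    (hE : ¬ FiniteDimensional 𝕜 E) (hF : ¬ FiniteDimensional 𝕜 F) : Nonempty (E ≃ₗᵢ[𝕜] F) := by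
  obtain ⟨bE⟩ := exists_hilbertBasis_nat hE
  obtain ⟨bF⟩ := exists_hilbertBasis_nat hF
  exact ⟨bE.repr.trans bF.repr.symm⟩

end SeparableHilbertSpace

namespace ContinuousLinearMap

theorem dense_range_adjoint_of_injective [CompleteSpace E] [CompleteSpace F] {B : E →L[𝕜] F}
    (hB : Function.Injective B) : Dense ((B†).range : Set E) := by
  rw [Submodule.dense_iff_topologicalClosure_eq_top, ← orthogonal_ker,
    LinearMap.ker_eq_bot.2 hB, Submodule.bot_orthogonal_eq_top]

theorem injective_adjoint_of_denseRange [CompleteSpace E] [CompleteSpace F] {T : E →L[𝕜] F}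
    (hT : DenseRange T) : Function.Injective (T†) := by
  change Function.Injective ((T† : F →L[𝕜] E) : F →ₗ[𝕜] E)
  rw [← LinearMap.ker_eq_bot, ← orthogonal_range,
    ← Submodule.topologicalClosure_eq_top_iff, ← Submodule.dense_iff_topologicalClosure_eq_top]
  exact hT

theorem finiteDimensional_of_denseRange [FiniteDimensional 𝕜 E] {T : E →L[𝕜] F}
    (hT : DenseRange T) : FiniteDimensional 𝕜 F := by
  have hclosed := (LinearMap.range (T : E →ₗ[𝕜] F)).closed_of_finiteDimensional
  have : LinearMap.range (T : E →ₗ[𝕜] F) = ⊤ := by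
    rw [← SetLike.coe_set_eq, ← hclosed.closure_eq, LinearMap.coe_range, coe_coe]
    simpa using hT.closure_range
  exact Module.Finite.of_surjective _ (LinearMap.range_eq_top.1 this)

end ContinuousLinearMap

theorem LinearMap.denseRange_codRestrict_topologicalClosure {X K : Type*} [AddCommGroup X]
    [Module 𝕜 X] [NormedAddCommGroup K] [NormedSpace 𝕜 K] (Θ : X →ₗ[𝕜] K) :
    DenseRange (Θ.codRestrict (LinearMap.range Θ).topologicalClosure
      fun x => (LinearMap.range Θ).le_topologicalClosure ⟨x, rfl⟩) := fun y => by
  rw [closure_subtype, ← Set.range_comp]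
  exact y.2

noncomputable def analysisOp (D : Submodule 𝕜 E) (f : ι → E)
    (hD : ∀ x ∈ D, Summable fun i => ‖⟪x, f i⟫_𝕜‖ ^ 2) : D →ₗ[𝕜] ℓ²(ι, 𝕜) where
  toFun x := ⟨fun i => ⟪f i, x⟫_𝕜, memℓp_two_of_summable <| by
    simpa only [norm_inner_symm] using hD x x.2⟩
  map_add' x y := Subtype.ext <| funext fun i => inner_add_right (f i) x y
  map_smul' c x := Subtype.ext <| funext fun i => inner_smul_right (f i) x c

section analysisOp

variable {D : Submodule 𝕜 E} {f : ι → E} {hD : ∀ x ∈ D, Summable fun i => ‖⟪x, f i⟫_𝕜‖ ^ 2}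

theorem analysisOp_apply (x : D) (i : ι) : analysisOp D f hD x i = ⟪f i, (x : E)⟫_𝕜 :=
  rfl

theorem inner_analysisOp_single [DecidableEq ι] (x : D) (i : ι) :
    ⟪analysisOp D f hD x, lp.single 2 i (1 : 𝕜)⟫_𝕜 = ⟪(x : E), f i⟫_𝕜 := by
  rw [lp.inner_single_right, analysisOp_apply, RCLike.inner_apply', mul_one, inner_conj_symm]

theorem norm_analysisOp_sq (x : D) :
    ‖analysisOp D f hD x‖ ^ 2 = ∑' i, ‖⟪(x : E), f i⟫_𝕜‖ ^ 2 := by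
  simp_rw [← (lp.hasSum_norm_sq (analysisOp D f hD x)).tsum_eq, analysisOp_apply, norm_inner_symm]

theorem sqrt_mul_norm_le_norm_analysisOp {A : ℝ} (hA : 0 ≤ A)
    (hlow : ∀ x ∈ D, A * ‖x‖ ^ 2 ≤ ∑' i, ‖⟪x, f i⟫_𝕜‖ ^ 2) (x : D) :
    √A * ‖(x : E)‖ ≤ ‖analysisOp D f hD x‖ := by
  refine (pow_le_pow_iff_left₀ (by positivity) (norm_nonneg _) two_ne_zero).1 ?_
  rw [mul_pow, Real.sq_sqrt hA, norm_analysisOp_sq]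
  exact hlow x x.2

end analysisOp

theorem IsParsevalFrame.exists_dense_lowerBound [CompleteSpace E] [CompleteSpace F] {f : ι → E}
    {B : E →L[𝕜] F} (hB : Function.Injective B) (h : IsParsevalFrame 𝕜 (B ∘ f)) :
    ∃ D : Submodule 𝕜 E, Dense (D : Set E) ∧ ∃ A : ℝ, 0 < A ∧ ∀ x ∈ D,
      Summable (fun i => ‖⟪x, f i⟫_𝕜‖ ^ 2) ∧ A * ‖x‖ ^ 2 ≤ ∑' i, ‖⟪x, f i⟫_𝕜‖ ^ 2 := by
  refine ⟨_, B.dense_range_adjoint_of_injective hB, (‖B‖ ^ 2 + 1)⁻¹, by positivity, ?_⟩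
  rintro _ ⟨y, rfl⟩
  have hy : HasSum (fun i => ‖⟪(B†) y, f i⟫_𝕜‖ ^ 2) (‖y‖ ^ 2) := by
    simpa only [Function.comp_apply, ContinuousLinearMap.adjoint_inner_left] using h y
  refine ⟨hy.summable, ?_⟩
  have hB' : ‖(B†) y‖ ≤ ‖B‖ * ‖y‖ := by
    simpa only [LinearIsometryEquiv.norm_map] using (B†).le_opNorm y
  rw [ContinuousLinearMap.coe_coe, hy.tsum_eq, inv_mul_le_iff₀ (by positivity)]
  calc ‖(B†) y‖ ^ 2 ≤ (‖B‖ * ‖y‖) ^ 2 := by gcongr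
    _ ≤ (‖B‖ ^ 2 + 1) * ‖y‖ ^ 2 := by nlinarith [sq_nonneg ‖y‖]

theorem exists_injective_isParsevalFrame_of_dense_lowerBound [CompleteSpace E]
    [TopologicalSpace.SeparableSpace E] (hE : ¬ FiniteDimensional 𝕜 E) {f : ℕ → E}
    {D : Submodule 𝕜 E} (hD : Dense (D : Set E)) {A : ℝ} (hA : 0 < A)
    (h : ∀ x ∈ D, Summable (fun i => ‖⟪x, f i⟫_𝕜‖ ^ 2) ∧ A * ‖x‖ ^ 2 ≤ ∑' i, ‖⟪x, f i⟫_𝕜‖ ^ 2) :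
    ∃ B : E →L[𝕜] E, Function.Injective B ∧ IsParsevalFrame 𝕜 (B ∘ f) := by
  have hsum : ∀ x ∈ D, Summable fun i => ‖⟪x, f i⟫_𝕜‖ ^ 2 := fun x hx => (h x hx).1
  set Θ := analysisOp D f hsum
  set M := (LinearMap.range Θ).topologicalClosure
  have : CompleteSpace M := (LinearMap.range Θ).isClosed_topologicalClosure.completeSpace_coe
  let e : D →ₗ[𝕜] M := Θ.codRestrict M fun x => (LinearMap.range Θ).le_topologicalClosure ⟨x, rfl⟩
  have he : DenseRange e := Θ.denseRange_codRestrict_topologicalClosure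
  have hbound (x : D) : ‖D.subtype x‖ ≤ (√A)⁻¹ * ‖e x‖ := by
    rw [Submodule.subtype_apply, inv_mul_eq_div, le_div_iff₀' (Real.sqrt_pos.2 hA)]
    exact sqrt_mul_norm_le_norm_analysisOp (hD := hsum) hA.le (fun x hx => (h x hx).2) x
  set T : M →L[𝕜] E := D.subtype.extendOfNorm e
  have hT (x : D) : T (e x) = x := LinearMap.extendOfNorm_eq he ⟨_, hbound⟩ x
  have hTdense : DenseRange T := hD.mono fun x hx => ⟨e ⟨x, hx⟩, hT ⟨x, hx⟩⟩
  have hTadj (i : ℕ) : (T†) (f i) = M.orthogonalProjectionOnto (lp.single 2 i 1) :=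
    he.eq_of_inner_right 𝕜 fun x => by
      rw [ContinuousLinearMap.adjoint_inner_right, hT,
        Submodule.inner_orthogonalProjectionOnto_eq_of_mem_left]
      exact (inner_analysisOp_single x i).symm
  have hM : ¬ FiniteDimensional 𝕜 M := fun _ =>
    hE (ContinuousLinearMap.finiteDimensional_of_denseRange hTdense)
  obtain ⟨U⟩ := nonempty_linearIsometryEquiv_of_not_finiteDimensional hM hE
  refine ⟨U.toContinuousLinearEquiv.toContinuousLinearMap ∘L (T†),
    U.injective.comp (ContinuousLinearMap.injective_adjoint_of_denseRange hTdense), ?_⟩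
  convert (isParsevalFrame_orthogonalProjectionOnto_single M).comp_linearIsometryEquiv U
  funext i
  simp [hTadj]

end

open scoped ComplexInnerProductSpace

/-- `{f_n}` is an ICFC sequence (some injective bounded operator `B` maps it to
a Parseval frame of `H`) iff there exist a dense subspace `D ⊆ H` and `A > 0` with
`A‖f‖² ≤ ∑ |⟨f, f_n⟩|² < ∞` for all `f ∈ D`. -/
theorem stmt4 {H : Type*} [NormedAddCommGroup H] [InnerProductSpace ℂ H]
    [CompleteSpace H] [TopologicalSpace.SeparableSpace H]
    (hH : ¬ FiniteDimensional ℂ H) (fseq : ℕ → H) :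
    (∃ B : H →L[ℂ] H, Function.Injective B ∧
        ∀ f : H, HasSum (fun n => ‖⟪f, B (fseq n)⟫‖ ^ 2) (‖f‖ ^ 2)) ↔
      ∃ D : Submodule ℂ H, Dense (D : Set H) ∧
        ∃ A : ℝ, 0 < A ∧ ∀ f ∈ D,
          Summable (fun n => ‖⟪f, fseq n⟫‖ ^ 2) ∧
          A * ‖f‖ ^ 2 ≤ ∑' n, ‖⟪f, fseq n⟫‖ ^ 2 :=
  ⟨fun ⟨_, hB, hframe⟩ => IsParsevalFrame.exists_dense_lowerBound hB hframe,
    fun ⟨_, hD, _, hA, h⟩ => exists_injective_isParsevalFrame_of_dense_lowerBound hH hD hA h⟩
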